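/- arXiv:0809.3767 — 4 statements merged into one kernel-verified Lean document; each statement's English description precedes it below -/
import Mathlib

section
/- Assume R₀ ≤ 1. If m : [0, ∞) → [0, ∞) is differentiable, integrable, satisfies m′(a) = −(d(a) + η ∫₀^∞ m(α) dα) · m(a) for all a ≥ 0 and m(0) = ∫₀^∞ b(a) m(a) da, then m is identically zero: when generations do not renew themselves in the absence of competition, the only stationary state of the logistic Gurtin–McCamy equation is the trivial one. -/
open MeasureTheory Set

/-- Probability of survival from age `a₁` to age `a₂` in the absence of competition. -/
noncomputable def survival (d : ℝ → ℝ) (a₁ a₂ : ℝ) : ℝ :=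
  Real.exp (-(∫ α in a₁..a₂, d α))

/-! Along a stationary solution the competition term `η ∫ m` is a constant `c`, so `m` solves a
linear equation and `m(a) = m(0) Π(0, a) e^{-c a}`. If `m(0) > 0`, then `c > 0` and the boundary
condition reads `∫ b Π e^{-c a} = 1`; since `e^{-c a} < 1` for `a > 0`, this integral is strictly
smaller than `R₀ ≤ 1`, a contradiction. -/

open Real

theorem survival_pos (d : ℝ → ℝ) (a₁ a₂ : ℝ) : 0 < survival d a₁ a₂ :=
  exp_pos _

section Survival

variable {d : ℝ → ℝ}

theorem continuous_survival (hd : Continuous d) (a₁ : ℝ) : Continuous (survival d a₁) :=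
  (intervalIntegral.continuous_primitive (fun _ _ => hd.intervalIntegrable _ _) a₁).neg.rexp

theorem survival_add_const {a₁ a₂ : ℝ} (hd : IntervalIntegrable d volume a₁ a₂) (c : ℝ) :
    survival (fun x => d x + c) a₁ a₂ = survival d a₁ a₂ * exp (-(c * (a₂ - a₁))) := by
  rw [survival, survival, intervalIntegral.integral_add hd intervalIntegrable_const,
    intervalIntegral.integral_const, smul_eq_mul, ← exp_add]
  ring_nf

theorem survival_le_exp {a₁ a₂ δ : ℝ} (hd : IntervalIntegrable d volume a₁ a₂) (h₁₂ : a₁ ≤ a₂)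
    (hδ : ∀ x ∈ Icc a₁ a₂, δ ≤ d x) : survival d a₁ a₂ ≤ exp (-(δ * (a₂ - a₁))) := by
  have h := intervalIntegral.integral_mono_on h₁₂ intervalIntegrable_const hd hδ
  rw [intervalIntegral.integral_const, smul_eq_mul] at h
  exact exp_le_exp.2 (by linarith)

theorem integrableOn_survival {a₀ δ : ℝ} (hd : Continuous d) (hδ : 0 < δ)
    (hdδ : ∀ x, a₀ ≤ x → δ ≤ d x) : IntegrableOn (survival d a₀) (Ioi a₀) := by
  refine ((exp_neg_integrableOn_Ioi a₀ hδ).const_mul (exp (δ * a₀))).mono'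
    (continuous_survival hd a₀).aestronglyMeasurable.restrict
    ((ae_restrict_iff' measurableSet_Ioi).2 (ae_of_all _ fun x hx => ?_))
  rw [norm_of_nonneg (survival_pos d a₀ x).le, ← exp_add]
  convert survival_le_exp (hd.intervalIntegrable a₀ x) (le_of_lt hx)
    (fun y hy => hdδ y hy.1) using 2
  ring

theorem eq_mul_survival_of_hasDerivAt {k m : ℝ → ℝ} {a₀ a : ℝ} (hk : Continuous k)
    (hm : ∀ x, a₀ ≤ x → HasDerivAt m (-k x * m x) x) (ha : a₀ ≤ a) :
    m a = m a₀ * survival k a₀ a := by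
  set K : ℝ → ℝ := fun x => ∫ y in a₀..x, k y
  have hK : ∀ x, HasDerivAt K (k x) x := fun x => (hk.integral_hasStrictDerivAt a₀ x).hasDerivAt
  have hconst : ∀ x ∈ Icc a₀ a, m x * exp (K x) = m a₀ * exp (K a₀) := by
    refine constant_of_has_deriv_right_zero (fun x hx => ?_) (fun x hx => ?_)
    · exact ((hm x hx.1).continuousAt.mul (hK x).exp.continuousAt).continuousWithinAt
    · have h := (hm x hx.1).mul (hK x).exp
      rw [show -k x * m x * exp (K x) + m x * (exp (K x) * k x) = 0 by ring] at h
      exact h.hasDerivWithinAt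
  have h := hconst a ⟨ha, le_rfl⟩
  simp only [K, intervalIntegral.integral_same, exp_zero, mul_one] at h
  rw [survival, exp_neg, ← h, mul_inv_cancel_right₀ (exp_pos _).ne']

end Survival

section SetIntegralPos

variable {X : Type*} [MeasurableSpace X] {μ : Measure X} {s : Set X} {f φ : X → ℝ}

theorem setIntegral_pos_of_pos (hs : MeasurableSet s) (hμs : μ s ≠ 0) (hf : IntegrableOn f s μ)
    (hpos : ∀ x ∈ s, 0 < f x) : 0 < ∫ x in s, f x ∂μ := by
  refine (setIntegral_pos_iff_support_of_nonneg_ae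
    ((ae_restrict_iff' hs).2 (ae_of_all _ fun x hx => (hpos x hx).le)) hf).2 ?_
  have hsupp : Function.support f ∩ s = s := inter_eq_right.2 fun x hx => (hpos x hx).ne'
  rwa [hsupp, pos_iff_ne_zero]

theorem setIntegral_mul_lt_of_lt_one (hs : MeasurableSet s) (hf : IntegrableOn f s μ)
    (hφ : AEStronglyMeasurable φ (μ.restrict s)) (hf₀ : ∀ x ∈ s, 0 ≤ f x)
    (hφ₀ : ∀ x ∈ s, 0 ≤ φ x) (hφ₁ : ∀ x ∈ s, φ x < 1)
    (hpos : 0 < ∫ x in s, f x * φ x ∂μ) : ∫ x in s, f x * φ x ∂μ < ∫ x in s, f x ∂μ := by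
  have hfφ : IntegrableOn (fun x => f x * φ x) s μ :=
    hf.mul_bdd hφ ((ae_restrict_iff' hs).2 (ae_of_all _ fun x hx => by
      rw [norm_of_nonneg (hφ₀ x hx)]; exact (hφ₁ x hx).le))
  have hsupp := (setIntegral_pos_iff_support_of_nonneg_ae
    ((ae_restrict_iff' hs).2 (ae_of_all _ fun x hx => mul_nonneg (hf₀ x hx) (hφ₀ x hx))) hfφ).1 hpos
  rw [← sub_pos, ← integral_sub hf hfφ]
  refine (setIntegral_pos_iff_support_of_nonneg_ae ((ae_restrict_iff' hs).2 (ae_of_all _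
    fun x hx => sub_nonneg.2 (mul_le_of_le_one_right (hf₀ x hx) (hφ₁ x hx).le))) (hf.sub hfφ)).2
    (hsupp.trans_le (measure_mono fun x ⟨hx, hxs⟩ => ⟨?_, hxs⟩))
  have hfx : f x ≠ 0 := left_ne_zero_of_mul hx
  simp only [Function.mem_support, ← mul_one_sub] at hx ⊢
  exact mul_ne_zero hfx (sub_ne_zero.2 (hφ₁ x hxs).ne')

end SetIntegralPos

theorem stationary_solution_trivial_of_R0_le_one_general
    (b d : ℝ → ℝ) (bbar dlow η : ℝ)
    (hbcont : Continuous b) (hb0 : ∀ a, 0 ≤ b a) (hbbar : ∀ a, b a ≤ bbar)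
    (hdcont : Continuous d) (hdlow : ∀ a, 0 ≤ a → dlow ≤ d a) (hdlowpos : 0 < dlow)
    (hη : 0 < η)
    (hR0 : (∫ a in Ioi (0 : ℝ), b a * survival d 0 a) ≤ 1)
    (m : ℝ → ℝ)
    (hm0 : ∀ a, 0 ≤ a → 0 ≤ m a)
    (hmint : IntegrableOn m (Ioi (0 : ℝ)))
    (hmderiv : ∀ a, 0 ≤ a →
      HasDerivAt m (-(d a + η * ∫ α in Ioi (0 : ℝ), m α) * m a) a)
    (hmbc : m 0 = ∫ a in Ioi (0 : ℝ), b a * m a) :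
    ∀ a, 0 ≤ a → m a = 0 := by
  set M := ∫ α in Ioi (0 : ℝ), m α
  have hrep : ∀ a, 0 ≤ a → m a = m 0 * (survival d 0 a * exp (-(η * M * a))) := fun a ha => by
    rw [eq_mul_survival_of_hasDerivAt (k := fun x => d x + η * M)
        (hdcont.add continuous_const) hmderiv ha,
      survival_add_const (hdcont.intervalIntegrable 0 a), sub_zero]
  rcases (hm0 0 le_rfl).eq_or_lt with h0 | h0
  · intro a ha
    rw [hrep a ha, ← h0, zero_mul]
  exfalso
  have hM : 0 < M := setIntegral_pos_of_pos measurableSet_Ioi (by simp) hmint fun a ha => by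
    rw [hrep a ha.le]
    exact mul_pos h0 (mul_pos (survival_pos d 0 a) (exp_pos _))
  have hG : IntegrableOn (fun a => b a * survival d 0 a) (Ioi 0) :=
    (integrableOn_survival hdcont hdlowpos hdlow).bdd_mul hbcont.aestronglyMeasurable
      (ae_of_all _ fun a => (norm_of_nonneg (hb0 a)).trans_le (hbbar a))
  have hrenewal : ∫ a in Ioi (0 : ℝ), b a * survival d 0 a * exp (-(η * M * a)) = 1 := by
    have h : m 0 = m 0 * ∫ a in Ioi (0 : ℝ), b a * survival d 0 a * exp (-(η * M * a)) := by
      calc m 0 = ∫ a in Ioi (0 : ℝ), b a * m a := hmbc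
        _ = ∫ a in Ioi (0 : ℝ), m 0 * (b a * survival d 0 a * exp (-(η * M * a))) :=
          setIntegral_congr_fun measurableSet_Ioi fun a ha => by rw [hrep a ha.le]; ring
        _ = _ := integral_const_mul _ _
    exact (mul_right_eq_self₀.1 h.symm).resolve_right h0.ne'
  have hlt := setIntegral_mul_lt_of_lt_one (φ := fun a => exp (-(η * M * a))) measurableSet_Ioi hG
    (by fun_prop : Continuous fun a => exp (-(η * M * a))).aestronglyMeasurable
    (fun a _ => mul_nonneg (hb0 a) (survival_pos d 0 a).le) (fun _ _ => (exp_pos _).le)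
    (fun a ha => exp_lt_one_iff.2 (neg_neg_of_pos (mul_pos (mul_pos hη hM) ha)))
    (hrenewal ▸ one_pos)
  linarith

/-- If `R₀ = ∫₀^∞ b(a) Π(0,a) da ≤ 1`, then any nonnegative, differentiable, integrable
solution of the stationary logistic Gurtin–McCamy equation
`m′(a) = -(d(a) + η ∫₀^∞ m) m(a)`, `m(0) = ∫₀^∞ b(a) m(a) da`,
is identically zero on `[0,∞)`: the only stationary state is the trivial one. -/
theorem stationary_solution_trivial_of_R0_le_one
    (b d : ℝ → ℝ) (bbar dlow η : ℝ)
    (hbcont : Continuous b) (hb0 : ∀ a, 0 ≤ b a) (hbbar : ∀ a, b a ≤ bbar)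
    (hbbarpos : 0 < bbar)
    (hdcont : Continuous d) (hdlow : ∀ a, 0 ≤ a → dlow ≤ d a) (hdlowpos : 0 < dlow)
    (hη : 0 < η)
    (hR0 : (∫ a in Ioi (0 : ℝ), b a * survival d 0 a) ≤ 1)
    (m : ℝ → ℝ)
    (hm0 : ∀ a, 0 ≤ a → 0 ≤ m a)
    (hmint : IntegrableOn m (Ioi (0 : ℝ)))
    (hmderiv : ∀ a, 0 ≤ a →
      HasDerivAt m (-(d a + η * ∫ α in Ioi (0 : ℝ), m α) * m a) a)
    (hmbc : m 0 = ∫ a in Ioi (0 : ℝ), b a * m a) :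
    ∀ a, 0 ≤ a → m a = 0 :=
  stationary_solution_trivial_of_R0_le_one_general b d bbar dlow η hbcont hb0 hbbar hdcont hdlow
    hdlowpos hη hR0 m hm0 hmint hmderiv hmbc
end

section
/- The function v solves the linear McKendrick–von Foerster equation along characteristics off the diagonal: for every a, t ≥ 0 with a ≠ t, the map s ↦ v(a + s, t + s), defined for s in a neighbourhood of 0, is differentiable at s = 0 with derivative −d(a) · v(a, t). -/
open MeasureTheory Set

/-- The function `v(a,t) = n₀(a-t) Π(a-t,a)/N₀` for `a ≥ t` and
`v(a,t) = B(t-a) Π(0,a)` for `a < t`. -/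
noncomputable def vSol (d n₀ : ℝ → ℝ) (N₀ : ℝ) (B : ℝ → ℝ) (a t : ℝ) : ℝ :=
  if t ≤ a then n₀ (a - t) * survival d (a - t) a / N₀ else B (t - a) * survival d 0 a

/-! Along a characteristic `s ↦ (a + s, t + s)` the argument `a - t` (resp. `t - a`) of the
initial datum (resp. birth rate) is constant, so `v` is a constant multiple of the survival
function `Π(c, a + s)`, whose logarithmic derivative is `-d(a)` by the fundamental theorem of
calculus. -/

lemma hasDerivAt_survival {d : ℝ → ℝ} (hd : Continuous d) (c a : ℝ) :
    HasDerivAt (survival d c) (-(d a) * survival d c a) a := by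
  have := ((hd.integral_hasStrictDerivAt c a).hasDerivAt.neg).exp
  rwa [mul_comm] at this

lemma hasDerivAt_const_mul_survival_add {d : ℝ → ℝ} (hd : Continuous d) (k c a : ℝ) :
    HasDerivAt (fun s => k * survival d c (a + s)) (-(d a) * (k * survival d c a)) 0 := by
  rw [mul_left_comm]
  refine .const_mul k (.comp_const_add a 0 ?_)
  simpa using hasDerivAt_survival hd c a

lemma vSol_add_add (d n₀ : ℝ → ℝ) (N₀ : ℝ) (B : ℝ → ℝ) (a t s : ℝ) :
    vSol d n₀ N₀ B (a + s) (t + s) =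
      if t ≤ a then n₀ (a - t) / N₀ * survival d (a - t) (a + s)
      else B (t - a) * survival d 0 (a + s) := by
  simp only [vSol, add_le_add_iff_right, add_sub_add_right_eq_sub, div_mul_eq_mul_div]

theorem vSol_mckendrick_along_characteristics_general
    (d n₀ : ℝ → ℝ)
    (hdcont : Continuous d)
    (B : ℝ → ℝ) :
    ∀ a t : ℝ, 0 ≤ a → 0 ≤ t → a ≠ t →
      HasDerivAt (fun s => vSol d n₀ (∫ α in Ioi (0 : ℝ), n₀ α) B (a + s) (t + s))
        (-(d a) * vSol d n₀ (∫ α in Ioi (0 : ℝ), n₀ α) B a t) 0 := by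
  intro a t _ _ _
  have hv := vSol_add_add d n₀ (∫ α in Ioi (0 : ℝ), n₀ α) B a t
  have hv₀ := hv 0
  simp only [add_zero] at hv₀
  simp only [hv, hv₀]
  split_ifs <;> exact hasDerivAt_const_mul_survival_add hdcont _ _ a

/-- `v` solves the linear McKendrick–von Foerster equation along the characteristics
off the diagonal: for `a, t ≥ 0` with `a ≠ t`, `s ↦ v(a+s, t+s)` is differentiable at
`s = 0` with derivative `-d(a) v(a,t)`. -/
theorem vSol_mckendrick_along_characteristics
    (d n₀ : ℝ → ℝ) (dlow : ℝ)
    (hdcont : Continuous d) (hdlow : ∀ a, 0 ≤ a → dlow ≤ d a) (hdlowpos : 0 < dlow)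
    (hn₀ : ∀ a, 0 ≤ a → 0 ≤ n₀ a) (hn₀int : IntegrableOn n₀ (Ioi (0 : ℝ)))
    (hN₀ : 0 < ∫ a in Ioi (0 : ℝ), n₀ a)
    (B : ℝ → ℝ) :
    ∀ a t : ℝ, 0 ≤ a → 0 ≤ t → a ≠ t →
      HasDerivAt (fun s => vSol d n₀ (∫ α in Ioi (0 : ℝ), n₀ α) B (a + s) (t + s))
        (-(d a) * vSol d n₀ (∫ α in Ioi (0 : ℝ), n₀ α) B a t) 0 :=
  vSol_mckendrick_along_characteristics_general d n₀ hdcont B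
end

section
/- Set B₀(t) = ∫₀^∞ b(α + t) (n₀(α) / N₀) Π(α, α + t) dα and g(a) = b(a) Π(0, a) for a ≥ 0. If B : [0, ∞) → ℝ is measurable, bounded on compact intervals, and satisfies the renewal equation B(t) = B₀(t) + ∫₀^t g(t − s) B(s) ds for all t ≥ 0, then the function v built from n₀ and B satisfies the birth boundary condition ∫₀^∞ b(a) v(a, t) da = B(t) for every t ≥ 0; in particular v(0, t) = ∫₀^∞ b(a) v(a, t) da for t > 0. -/
/-!
Split the birth integral at `a = t`. On `(0, t)` the solution is `B (t - a) Π(0, a)`, and the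
substitution `s = t - a` turns this piece into the convolution term of the renewal equation; on
`(t, ∞)` it is the transported initial datum, and the shift `a = α + t` turns that piece into
`B₀(t)`. Both pieces are integrable because `b` is bounded, `Π ≤ 1` where `d ≥ 0`, `B` is bounded
on `[0, t]` and `n₀` is integrable.
-/

open MeasureTheory Set

section Survival

variable {d : ℝ → ℝ}

lemma survival_self (d : ℝ → ℝ) (a : ℝ) : survival d a a = 1 := by
  simp [survival]

lemma survival_nonneg (d : ℝ → ℝ) (a c : ℝ) : 0 ≤ survival d a c :=
  (Real.exp_pos _).le

lemma survival_le_one {a c : ℝ} (hac : a ≤ c) (hd : ∀ x ∈ Icc a c, 0 ≤ d x) :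
    survival d a c ≤ 1 :=
  Real.exp_le_one_iff.mpr <| neg_nonpos.mpr <| intervalIntegral.integral_nonneg hac hd

lemma continuous_survival_s9 (hd : Continuous d) {f g : ℝ → ℝ} (hf : Continuous f)
    (hg : Continuous g) : Continuous fun x => survival d (f x) (g x) := by
  set F : ℝ → ℝ := fun y => ∫ α in (0 : ℝ)..y, d α
  have hF : Continuous F :=
    intervalIntegral.continuous_primitive (fun _ _ => hd.intervalIntegrable _ _) 0
  have hsurvival : ∀ x, survival d (f x) (g x) = Real.exp (-(F (g x) - F (f x))) := fun x => by
    rw [survival, intervalIntegral.integral_interval_sub_left (hd.intervalIntegrable _ _)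
      (hd.intervalIntegrable _ _)]
  simp only [hsurvival]
  exact ((hF.comp hg).sub (hF.comp hf)).neg.rexp

end Survival

section Shift

variable {E : Type*} [NormedAddCommGroup E]

lemma setIntegral_Ioi_comp_add_right [NormedSpace ℝ E] (f : ℝ → E) (s t : ℝ) :
    ∫ x in Ioi s, f (x + t) = ∫ x in Ioi (s + t), f x := by
  simpa only [preimage_add_const_Ioi, add_sub_cancel_right] using
    (measurePreserving_add_right volume t).setIntegral_preimage_emb
      (measurableEmbedding_addRight t) f (Ioi (s + t))

lemma integrableOn_Ioi_comp_add_right {f : ℝ → E} {s : ℝ} (t : ℝ) :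
    IntegrableOn (fun x => f (x + t)) (Ioi s) ↔ IntegrableOn f (Ioi (s + t)) := by
  simpa only [preimage_add_const_Ioi, add_sub_cancel_right, Function.comp_def] using
    (measurePreserving_add_right volume t).integrableOn_comp_preimage
      (measurableEmbedding_addRight t) (f := f) (s := Ioi (s + t))

end Shift

section BoundaryCondition

variable {t : ℝ}

lemma vSol_zero_left (d n₀ : ℝ → ℝ) (N₀ : ℝ) (B : ℝ → ℝ) (ht : 0 < t) :
    vSol d n₀ N₀ B 0 t = B t := by
  rw [vSol, if_neg ht.not_ge, sub_zero, survival_self, mul_one]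

lemma intervalIntegral_mul_vSol (b d n₀ : ℝ → ℝ) (N₀ : ℝ) (B : ℝ → ℝ) (ht : 0 ≤ t) :
    ∫ a in (0 : ℝ)..t, b a * vSol d n₀ N₀ B a t =
      ∫ s in (0 : ℝ)..t, b (t - s) * survival d 0 (t - s) * B s := by
  have hbelow : ∫ a in (0 : ℝ)..t, b a * vSol d n₀ N₀ B a t =
      ∫ a in (0 : ℝ)..t, b a * (B (t - a) * survival d 0 a) := by
    refine intervalIntegral.integral_congr_ae ?_
    filter_upwards [Measure.ae_ne volume t] with a hat ha
    rw [uIoc_of_le ht] at ha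
    rw [vSol, if_neg (lt_of_le_of_ne ha.2 hat).not_ge]
  simpa [hbelow, mul_comm, mul_left_comm] using
    (intervalIntegral.integral_comp_sub_left
      (fun s => b (t - s) * survival d 0 (t - s) * B s) (a := 0) (b := t) t)

lemma setIntegral_Ioi_mul_vSol (b d n₀ : ℝ → ℝ) (N₀ : ℝ) (B : ℝ → ℝ) :
    ∫ a in Ioi t, b a * vSol d n₀ N₀ B a t =
      ∫ α in Ioi (0 : ℝ), b (α + t) * (n₀ α / N₀) * survival d α (α + t) := by
  rw [← zero_add t, ← setIntegral_Ioi_comp_add_right, zero_add]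
  refine setIntegral_congr_fun measurableSet_Ioi fun α (hα : 0 < α) => ?_
  rw [vSol, if_pos (by linarith), add_sub_cancel_right]
  ring

variable {b d n₀ B : ℝ → ℝ} {bbar : ℝ} (hb : Measurable b) (hbbar : ∀ a, |b a| ≤ bbar)
  (hd : Continuous d) (hd0 : ∀ a, 0 ≤ a → 0 ≤ d a)
include hb hbbar hd hd0

lemma intervalIntegrable_mul_vSol (N₀ : ℝ) (hB : Measurable B) {M : ℝ}
    (hBM : ∀ s ∈ Icc 0 t, |B s| ≤ M) (ht : 0 ≤ t) :
    IntervalIntegrable (fun a => b a * vSol d n₀ N₀ B a t) volume 0 t := by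
  rw [intervalIntegrable_iff_integrableOn_Ioc_of_le ht]
  have hbelow : IntegrableOn (fun a => b a * (B (t - a) * survival d 0 a)) (Ioc 0 t) := by
    refine Measure.integrableOn_of_bounded (M := bbar * (M * 1)) measure_Ioc_lt_top.ne
      (hb.mul ((hB.comp (measurable_const.sub measurable_id)).mul
        (continuous_survival_s9 hd continuous_const continuous_id).measurable)).aestronglyMeasurable ?_
    filter_upwards [ae_restrict_mem measurableSet_Ioc] with a ⟨ha0, hat⟩
    have hBa : |B (t - a)| ≤ M := hBM _ ⟨by linarith, by linarith⟩
    have hsurvival : survival d 0 a ≤ 1 := survival_le_one ha0.le fun x hx => hd0 x hx.1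
    rw [Real.norm_eq_abs, abs_mul, abs_mul, abs_of_nonneg (survival_nonneg d 0 a)]
    exact mul_le_mul (hbbar a) (mul_le_mul hBa hsurvival (survival_nonneg d 0 a)
      ((abs_nonneg _).trans hBa))
      (mul_nonneg (abs_nonneg _) (survival_nonneg d 0 a)) ((abs_nonneg _).trans (hbbar a))
  refine hbelow.congr_fun_ae ?_
  filter_upwards [ae_restrict_mem measurableSet_Ioc, ae_restrict_of_ae (Measure.ae_ne volume t)]
    with a ha hat
  rw [vSol, if_neg (lt_of_le_of_ne ha.2 hat).not_ge]

lemma integrableOn_Ioi_mul_vSol (N₀ : ℝ) (B : ℝ → ℝ) (hn₀ : IntegrableOn n₀ (Ioi 0))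
    (ht : 0 ≤ t) :
    IntegrableOn (fun a => b a * vSol d n₀ N₀ B a t) (Ioi t) := by
  have hn₀t : IntegrableOn (fun a => n₀ (a - t)) (Ioi t) := by
    rw [← zero_add t, ← integrableOn_Ioi_comp_add_right, zero_add]
    simpa using hn₀
  have hweight : IntegrableOn (fun a => b a * survival d (a - t) a * n₀ (a - t) / N₀) (Ioi t) := by
    refine (Integrable.bdd_mul (c := bbar * 1) hn₀t ?_ ?_).div_const N₀
    · exact (hb.mul (continuous_survival_s9 hd (continuous_id.sub continuous_const)
        continuous_id).measurable).aestronglyMeasurable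
    · filter_upwards [ae_restrict_mem measurableSet_Ioi] with a (hta : t < a)
      have hsurvival : survival d (a - t) a ≤ 1 :=
        survival_le_one (by linarith) fun x hx => hd0 x (by linarith [hx.1])
      rw [Real.norm_eq_abs, abs_mul, abs_of_nonneg (survival_nonneg d _ a)]
      exact mul_le_mul (hbbar a) hsurvival (survival_nonneg d _ a)
        ((abs_nonneg _).trans (hbbar a))
  refine hweight.congr_fun (fun a (hta : t < a) => ?_) measurableSet_Ioi
  rw [vSol, if_pos hta.le]
  ring

lemma integral_Ioi_mul_vSol (N₀ : ℝ) (hB : Measurable B) {M : ℝ}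
    (hBM : ∀ s ∈ Icc 0 t, |B s| ≤ M) (hn₀ : IntegrableOn n₀ (Ioi 0)) (ht : 0 ≤ t) :
    ∫ a in Ioi (0 : ℝ), b a * vSol d n₀ N₀ B a t =
      (∫ α in Ioi (0 : ℝ), b (α + t) * (n₀ α / N₀) * survival d α (α + t)) +
        ∫ s in (0 : ℝ)..t, b (t - s) * survival d 0 (t - s) * B s := by
  rw [← intervalIntegral.integral_interval_add_Ioi'
      (intervalIntegrable_mul_vSol hb hbbar hd hd0 N₀ hB hBM ht)
      (integrableOn_Ioi_mul_vSol hb hbbar hd hd0 N₀ B hn₀ ht),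
    intervalIntegral_mul_vSol b d n₀ N₀ B ht, setIntegral_Ioi_mul_vSol, add_comm]

end BoundaryCondition

theorem vSol_boundary_condition_general
    (b d n₀ : ℝ → ℝ) (bbar dlow : ℝ)
    (hbcont : Continuous b) (hb0 : ∀ a, 0 ≤ b a) (hbbar : ∀ a, b a ≤ bbar)
    (hdcont : Continuous d) (hdlow : ∀ a, 0 ≤ a → dlow ≤ d a) (hdlowpos : 0 < dlow)
    (hn₀int : IntegrableOn n₀ (Ioi (0 : ℝ)))
    (N₀ : ℝ)
    (B : ℝ → ℝ) (hBmeas : Measurable B)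
    (hBbdd : ∀ T, 0 < T → ∃ M, ∀ t ∈ Icc (0 : ℝ) T, |B t| ≤ M)
    (hBeq : ∀ t, 0 ≤ t →
      B t = (∫ α in Ioi (0 : ℝ), b (α + t) * (n₀ α / N₀) * survival d α (α + t)) +
        ∫ s in (0 : ℝ)..t, b (t - s) * survival d 0 (t - s) * B s) :
    (∀ t, 0 ≤ t → (∫ a in Ioi (0 : ℝ), b a * vSol d n₀ N₀ B a t) = B t) ∧
    (∀ t, 0 < t → vSol d n₀ N₀ B 0 t = ∫ a in Ioi (0 : ℝ), b a * vSol d n₀ N₀ B a t) := by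
  have hb : ∀ a, |b a| ≤ bbar := fun a => (abs_of_nonneg (hb0 a)).trans_le (hbbar a)
  have hd0 : ∀ a, 0 ≤ a → 0 ≤ d a := fun a ha => hdlowpos.le.trans (hdlow a ha)
  have boundary : ∀ t, 0 ≤ t → ∫ a in Ioi (0 : ℝ), b a * vSol d n₀ N₀ B a t = B t := by
    intro t ht
    obtain ⟨M, hM⟩ := hBbdd (t + 1) (by linarith)
    have hBM : ∀ s ∈ Icc 0 t, |B s| ≤ M := fun s hs =>
      hM s (Icc_subset_Icc_right (by linarith) hs)
    rw [integral_Ioi_mul_vSol hbcont.measurable hb hdcont hd0 N₀ hBmeas hBM hn₀int ht, hBeq t ht]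
  exact ⟨boundary, fun t ht => by rw [vSol_zero_left d n₀ N₀ B ht, boundary t ht.le]⟩

/-- If `B` solves the renewal equation with `B₀(t) = ∫₀^∞ b(α+t) (n₀(α)/N₀) Π(α,α+t) dα`
and `g(a) = b(a) Π(0,a)`, then `v` built from `n₀` and `B` satisfies the birth boundary
condition `∫₀^∞ b(a) v(a,t) da = B(t)`; in particular `v(0,t) = ∫₀^∞ b(a) v(a,t) da`
for `t > 0`. -/
theorem vSol_boundary_condition
    (b d n₀ : ℝ → ℝ) (bbar dlow : ℝ)
    (hbcont : Continuous b) (hb0 : ∀ a, 0 ≤ b a) (hbbar : ∀ a, b a ≤ bbar)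
    (hbbarpos : 0 < bbar)
    (hdcont : Continuous d) (hdlow : ∀ a, 0 ≤ a → dlow ≤ d a) (hdlowpos : 0 < dlow)
    (hn₀ : ∀ a, 0 ≤ a → 0 ≤ n₀ a) (hn₀int : IntegrableOn n₀ (Ioi (0 : ℝ)))
    (N₀ : ℝ) (hN₀def : N₀ = ∫ a in Ioi (0 : ℝ), n₀ a) (hN₀pos : 0 < N₀)
    (B : ℝ → ℝ) (hBmeas : Measurable B)
    (hBbdd : ∀ T, 0 < T → ∃ M, ∀ t ∈ Icc (0 : ℝ) T, |B t| ≤ M)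
    (hBeq : ∀ t, 0 ≤ t →
      B t = (∫ α in Ioi (0 : ℝ), b (α + t) * (n₀ α / N₀) * survival d α (α + t)) +
        ∫ s in (0 : ℝ)..t, b (t - s) * survival d 0 (t - s) * B s) :
    (∀ t, 0 ≤ t → (∫ a in Ioi (0 : ℝ), b a * vSol d n₀ N₀ B a t) = B t) ∧
    (∀ t, 0 < t → vSol d n₀ N₀ B 0 t = ∫ a in Ioi (0 : ℝ), b a * vSol d n₀ N₀ B a t) :=
  vSol_boundary_condition_general b d n₀ bbar dlow hbcont hb0 hbbar hdcont hdlow hdlowpos hn₀int N₀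
    B hBmeas hBbdd hBeq
end

section
/- Assume R₀ > 1, let n̂ be the stationary age profile, N̂ = ∫₀^∞ n̂(a) da, and let E(T) = ∫₀^∞ exp(−∫₀^a (d(α) + η N̂) dα) da be the expected individual lifespan at the stationary state. Then ∫₀^∞ b(a) n̂(a) da = N̂ / E(T); equivalently, the per-capita rate of births at stationarity equals the inverse of the expected lifespan, so mutants of per-birth probability p are generated at rate p N̂ / E(T). -/
open MeasureTheory Set

/-- The Euler–Lotka characteristic function `φ(λ) = ∫₀^∞ e^{-λ a} b(a) Π(0,a) da`. -/
noncomputable def eulerLotka (b d : ℝ → ℝ) (lam : ℝ) : ℝ :=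
  ∫ a in Ioi (0 : ℝ), Real.exp (-lam * a) * b a * survival d 0 a

/-- The stationary age profile
`n̂(a) = λ₁ e^{-λ₁ a} Π(0,a) / (η ∫₀^∞ e^{-λ₁ α} Π(0,α) dα)`. -/
noncomputable def statProfile (d : ℝ → ℝ) (η lam : ℝ) (a : ℝ) : ℝ :=
  lam * Real.exp (-lam * a) * survival d 0 a /
    (η * ∫ α in Ioi (0 : ℝ), Real.exp (-lam * α) * survival d 0 α)

/-!
The stationary profile is `n̂ = c · e^{-λ₁ a} Π(0,a)` with `c = λ₁ / (η L)`, where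
`L = ∫₀^∞ e^{-λ₁ a} Π(0,a) da` is the Laplace transform of the survival function. Hence
`N̂ = c L = λ₁ / η`, and the Euler–Lotka equation `φ(λ₁) = 1` gives the birth rate
`∫ b n̂ = c`. Since `η N̂ = λ₁`, competition at stationarity adds exactly the discount `λ₁`
to the death rate, so `E(T) = L`, and `N̂ / E(T) = c L / L = c`.
-/

noncomputable def survivalLaplace (d : ℝ → ℝ) (lam : ℝ) : ℝ :=
  ∫ a in Ioi (0 : ℝ), Real.exp (-lam * a) * survival d 0 a

lemma exp_neg_integral_add_const {d : ℝ → ℝ} {a : ℝ} (hd : IntervalIntegrable d volume 0 a)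
    (c : ℝ) : Real.exp (-(∫ α in (0 : ℝ)..a, (d α + c))) = Real.exp (-c * a) * survival d 0 a := by
  rw [intervalIntegral.integral_add hd intervalIntegrable_const, intervalIntegral.integral_const,
    smul_eq_mul, survival, ← Real.exp_add]
  ring_nf

lemma integral_exp_neg_integral_add_const {d : ℝ → ℝ}
    (hd : ∀ a, IntervalIntegrable d volume 0 a) (c : ℝ) :
    ∫ a in Ioi (0 : ℝ), Real.exp (-(∫ α in (0 : ℝ)..a, (d α + c))) = survivalLaplace d c :=
  integral_congr_ae <| .of_forall fun a => exp_neg_integral_add_const (hd a) c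

lemma statProfile_eq (d : ℝ → ℝ) (η lam a : ℝ) :
    statProfile d η lam a =
      lam / (η * survivalLaplace d lam) * (Real.exp (-lam * a) * survival d 0 a) := by
  rw [statProfile, survivalLaplace]
  ring

lemma integral_statProfile (d : ℝ → ℝ) (η lam : ℝ) :
    ∫ a in Ioi (0 : ℝ), statProfile d η lam a =
      lam / (η * survivalLaplace d lam) * survivalLaplace d lam := by
  simp_rw [statProfile_eq]
  rw [integral_const_mul, survivalLaplace]

lemma integral_mul_statProfile {b d : ℝ → ℝ} {lam : ℝ} (hroot : eulerLotka b d lam = 1) (η : ℝ) :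
    ∫ a in Ioi (0 : ℝ), b a * statProfile d η lam a = lam / (η * survivalLaplace d lam) := by
  have hpoint : ∀ a, b a * statProfile d η lam a =
      lam / (η * survivalLaplace d lam) * (Real.exp (-lam * a) * b a * survival d 0 a) := by
    intro a
    rw [statProfile_eq]
    ring
  simp_rw [hpoint]
  rw [integral_const_mul, ← eulerLotka, hroot, mul_one]

theorem stationary_birth_rate_eq_inverse_lifespan_general
    (b d : ℝ → ℝ) (η lam : ℝ)
    (hdcont : Continuous d)
    (hroot : eulerLotka b d lam = 1)
    (Nhat : ℝ) (hNhat : Nhat = ∫ a in Ioi (0 : ℝ), statProfile d η lam a)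
    (lifespan : ℝ)
    (hlifespan : lifespan =
      ∫ a in Ioi (0 : ℝ), Real.exp (-(∫ α in (0 : ℝ)..a, (d α + η * Nhat)))) :
    (∫ a in Ioi (0 : ℝ), b a * statProfile d η lam a) = Nhat / lifespan ∧
    (∀ p : ℝ, p * ∫ a in Ioi (0 : ℝ), b a * statProfile d η lam a
      = p * Nhat / lifespan) := by
  rw [integral_statProfile] at hNhat
  set L := survivalLaplace d lam
  have hbirth : ∫ a in Ioi (0 : ℝ), b a * statProfile d η lam a = lam / (η * L) :=
    integral_mul_statProfile hroot η
  have hmain : lam / (η * L) = Nhat / lifespan := by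
    -- `N̂ = c L` vanishes together with `c`
    by_cases hc : lam / (η * L) = 0
    · rw [hc, hNhat, hc, zero_mul, zero_div]
    obtain ⟨-, hη, hL⟩ : lam ≠ 0 ∧ η ≠ 0 ∧ L ≠ 0 := by
      simp only [div_eq_zero_iff, mul_eq_zero, not_or] at hc
      exact hc
    have hcompetition : η * Nhat = lam := by
      rw [hNhat]
      field_simp
    rw [hlifespan, hcompetition,
      integral_exp_neg_integral_add_const (fun a => hdcont.intervalIntegrable 0 a), hNhat]
    exact (mul_div_cancel_right₀ _ hL).symm
  refine ⟨hbirth.trans hmain, fun p => ?_⟩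
  rw [hbirth, hmain, mul_div_assoc]

/-- At stationarity, the total birth rate equals `N̂ / E(T)`, the population size divided
by the expected individual lifespan `E(T) = ∫₀^∞ exp(-∫₀^a (d(α)+ηN̂) dα) da`; hence
mutants of per-birth probability `p` are generated at rate `p N̂ / E(T)`. -/
theorem stationary_birth_rate_eq_inverse_lifespan
    (b d : ℝ → ℝ) (bbar dlow η lam : ℝ)
    (hbcont : Continuous b) (hb0 : ∀ a, 0 ≤ b a) (hbbar : ∀ a, b a ≤ bbar)
    (hbbarpos : 0 < bbar)
    (hdcont : Continuous d) (hdlow : ∀ a, 0 ≤ a → dlow ≤ d a) (hdlowpos : 0 < dlow)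
    (hη : 0 < η)
    (hR0 : 1 < ∫ a in Ioi (0 : ℝ), b a * survival d 0 a)
    (hlam : 0 < lam) (hroot : eulerLotka b d lam = 1)
    (Nhat : ℝ) (hNhat : Nhat = ∫ a in Ioi (0 : ℝ), statProfile d η lam a)
    (lifespan : ℝ)
    (hlifespan : lifespan =
      ∫ a in Ioi (0 : ℝ), Real.exp (-(∫ α in (0 : ℝ)..a, (d α + η * Nhat)))) :
    (∫ a in Ioi (0 : ℝ), b a * statProfile d η lam a) = Nhat / lifespan ∧
    (∀ p : ℝ, p * ∫ a in Ioi (0 : ℝ), b a * statProfile d η lam a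
      = p * Nhat / lifespan) :=
  stationary_birth_rate_eq_inverse_lifespan_general b d η lam hdcont hroot Nhat hNhat lifespan
    hlifespan
end
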